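/- Let g > 0 and A > 0 be real numbers and let α ≥ 2 be an integer. Then the Cauchy principal value PV ∫₀^∞ e^{−S/g^{1/α}}/(1 − A·S^α) dS, taken at the pole S₀ = A^{−1/α}, exists and is strictly positive; that is, there exists L > 0 such that lim_{ε→0⁺} ( ∫₀^{(1−ε)·A^{−1/α}} e^{−S/g^{1/α}}/(1 − A·S^α) dS + ∫_{(1+ε)·A^{−1/α}}^∞ e^{−S/g^{1/α}}/(1 − A·S^α) dS ) = L. -/

import Mathlib

/-!
Scaling `S = A^{-1/α} u` moves the pole to `u = 1` and turns the integrand into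
`F u = e^{-k u} / (1 - u^α)` with `k = A^{-1/α} / g^{1/α}`. The substitution `u ↦ w⁻¹` maps
`((1 + ε), ∞)` onto `(0, (1 + ε)⁻¹)` and folds `F` into
`G w = F w + F w⁻¹ / w² = (w² e^{-k w} - w^α e^{-k/w}) / (w² (1 - w^α))`,
in which the pole cancels: `G` is positive and bounded on `(0, 1)`. The truncated principal value
is then `∫₀^{(1+ε)⁻¹} G` minus the integral of `F` over the gap `(1 - ε, (1 + ε)⁻¹)`; the gap has
length `ε² / (1 + ε)` and `F ≤ (1 + ε) / ε` on it, so the truncation tends to `∫₀¹ G > 0`.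
-/

open MeasureTheory Filter

section

open Set Real
open scoped Topology Interval

noncomputable def pvTruncation (f : ℝ → ℝ) (x₀ ε : ℝ) : ℝ :=
  (∫ S in (0:ℝ)..((1 - ε) * x₀), f S) + ∫ S in Ioi ((1 + ε) * x₀), f S

theorem pvTruncation_eq_mul_pvTruncation_comp_mul_left (f : ℝ → ℝ) {σ : ℝ} (hσ : 0 < σ)
    (ε : ℝ) : pvTruncation f σ ε = σ * pvTruncation (fun u => f (σ * u)) 1 ε := by
  simp only [pvTruncation, intervalIntegral.integral_comp_mul_left f hσ.ne',
    integral_comp_mul_left_Ioi f _ hσ, smul_eq_mul, mul_zero]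
  field_simp

theorem integral_Ioi_eq_integral_Ioo_inv (f : ℝ → ℝ) {a : ℝ} (ha : 0 < a) :
    ∫ u in Ioi a, f u = ∫ w in Ioo 0 a⁻¹, f w⁻¹ / w ^ 2 := by
  have himage : Inv.inv '' Ioo 0 a⁻¹ = Ioi a := by
    rw [image_inv_eq_inv, inv_Ioo_0_left (inv_pos.2 ha), inv_inv]
  rw [← himage, integral_image_eq_integral_abs_deriv_smul measurableSet_Ioo
    (fun w hw => (hasDerivAt_inv hw.1.ne').hasDerivWithinAt) inv_injective.injOn]
  refine setIntegral_congr_fun measurableSet_Ioo fun w _ => ?_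
  rw [abs_neg, abs_of_nonneg (by positivity), smul_eq_mul, div_eq_inv_mul]

noncomputable def borelKernel (k : ℝ) (α : ℕ) (u : ℝ) : ℝ :=
  exp (-(k * u)) / (1 - u ^ α)

noncomputable def foldedBorelKernel (k : ℝ) (α : ℕ) (w : ℝ) : ℝ :=
  borelKernel k α w + borelKernel k α w⁻¹ / w ^ 2

theorem borelKernel_inv_div_sq (k : ℝ) (α : ℕ) {w : ℝ} (hw : w ≠ 0) :
    borelKernel k α w⁻¹ / w ^ 2 = -(w ^ α * exp (-(k * w⁻¹)) / (w ^ 2 * (1 - w ^ α))) := by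
  rcases eq_or_ne (w ^ α) 1 with h | h
  · simp [borelKernel, inv_pow, h]
  have hden : 1 - w ^ α ≠ 0 := sub_ne_zero.2 (Ne.symm h)
  have hden_inv : 1 - (w ^ α)⁻¹ ≠ 0 := by
    rwa [sub_ne_zero, ne_comm, inv_ne_one]
  simp only [borelKernel, inv_pow]
  field_simp
  ring

theorem foldedBorelKernel_eq (k : ℝ) (α : ℕ) {w : ℝ} (hw : w ≠ 0) :
    foldedBorelKernel k α w =
      (w ^ 2 * exp (-(k * w)) - w ^ α * exp (-(k * w⁻¹))) / (w ^ 2 * (1 - w ^ α)) := by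
  rw [foldedBorelKernel, borelKernel_inv_div_sq k α hw, borelKernel]
  field_simp
  ring

theorem exp_sub_exp_le_sub_of_nonpos {a b : ℝ} (hba : b ≤ a) (ha : a ≤ 0) :
    exp a - exp b ≤ a - b := by
  have hb : exp a * (1 + (b - a)) ≤ exp b := by
    calc exp a * (1 + (b - a)) ≤ exp a * exp (b - a) := by
          gcongr; linarith [add_one_le_exp (b - a)]
      _ = exp b := by rw [← exp_add]; ring_nf
  nlinarith [exp_le_one_iff.2 ha, exp_pos a]

variable {k : ℝ} {α : ℕ}

theorem foldedBorelKernel_pos (hk : 0 < k) (hα : 2 ≤ α) {w : ℝ} (hw0 : 0 < w) (hw1 : w < 1) :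
    0 < foldedBorelKernel k α w := by
  have hpow : w ^ α ≤ w ^ 2 := pow_le_pow_of_le_one hw0.le hw1.le hα
  have hexp : exp (-(k * w⁻¹)) < exp (-(k * w)) := by
    gcongr
    exact hw1.trans (one_lt_inv₀ hw0 |>.2 hw1)
  rw [foldedBorelKernel_eq k α hw0.ne']
  refine div_pos (sub_pos.2 ?_)
    (mul_pos (by positivity) (sub_pos.2 (pow_lt_one₀ hw0.le hw1 (by omega))))
  calc w ^ α * exp (-(k * w⁻¹)) ≤ w ^ 2 * exp (-(k * w⁻¹)) := by gcongr
    _ < w ^ 2 * exp (-(k * w)) := by gcongr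

theorem foldedBorelKernel_le (hk : 0 ≤ k) (hα : 2 ≤ α) {w : ℝ} (hw0 : 0 < w) (hw1 : w < 1) :
    foldedBorelKernel k α w ≤ k / w + 1 := by
  have hpow : w ^ α ≤ w ^ 2 := pow_le_pow_of_le_one hw0.le hw1.le hα
  have hkw : k * w ≤ k * w⁻¹ := by
    gcongr
    exact hw1.le.trans (one_le_inv₀ hw0 |>.2 hw1.le)
  have hexp := exp_sub_exp_le_sub_of_nonpos (neg_le_neg hkw) (by nlinarith : -(k * w) ≤ 0)
  have he1 : exp (-(k * w⁻¹)) ≤ 1 := exp_le_one_iff.2 (by nlinarith [inv_pos.2 hw0])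
  have hfirst : w ^ 2 * (exp (-(k * w)) - exp (-(k * w⁻¹))) ≤ k * w * (1 - w ^ α) :=
    calc w ^ 2 * (exp (-(k * w)) - exp (-(k * w⁻¹))) ≤ w ^ 2 * (k * w⁻¹ - k * w) :=
          mul_le_mul_of_nonneg_left (by linarith) (sq_nonneg w)
      _ = k * w * (1 - w ^ 2) := by field_simp
      _ ≤ k * w * (1 - w ^ α) := by gcongr
  have hsecond : (w ^ 2 - w ^ α) * exp (-(k * w⁻¹)) ≤ w ^ 2 * (1 - w ^ α) :=
    calc (w ^ 2 - w ^ α) * exp (-(k * w⁻¹)) ≤ w ^ 2 - w ^ α :=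
          mul_le_of_le_one_right (sub_nonneg.2 hpow) he1
      _ ≤ w ^ 2 * (1 - w ^ α) := by
          have : w ^ 2 * w ^ α ≤ w ^ α :=
            mul_le_of_le_one_left (pow_nonneg hw0.le α) (pow_le_one₀ hw0.le hw1.le)
          linarith [mul_one_sub (w ^ 2) (w ^ α)]
  rw [foldedBorelKernel_eq k α hw0.ne',
    div_le_iff₀ (mul_pos (by positivity) (sub_pos.2 (pow_lt_one₀ hw0.le hw1 (by omega))))]
  calc w ^ 2 * exp (-(k * w)) - w ^ α * exp (-(k * w⁻¹))
      = w ^ 2 * (exp (-(k * w)) - exp (-(k * w⁻¹))) + (w ^ 2 - w ^ α) * exp (-(k * w⁻¹)) := by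
        ring
    _ ≤ k * w * (1 - w ^ α) + w ^ 2 * (1 - w ^ α) := add_le_add hfirst hsecond
    _ = (k / w + 1) * (w ^ 2 * (1 - w ^ α)) := by field_simp

theorem norm_borelKernel_le (hk : 0 ≤ k) (hα : α ≠ 0) {u c : ℝ} (hu : 0 ≤ u) (huc : u ≤ c)
    (hc : c < 1) : ‖borelKernel k α u‖ ≤ (1 - c)⁻¹ := by
  have hpow : u ^ α ≤ u := pow_le_of_le_one hu (huc.trans hc.le) hα
  rw [borelKernel, norm_div, norm_of_nonneg (exp_pos _).le,
    norm_of_nonneg (by linarith), ← one_div]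
  exact div_le_div₀ zero_le_one (exp_le_one_iff.2 (by nlinarith)) (by linarith) (by linarith)

theorem norm_borelKernel_inv_div_sq_le (hk : 0 ≤ k) (hα : 2 ≤ α) {w c : ℝ} (hw : 0 < w)
    (hwc : w ≤ c) (hc : c < 1) : ‖borelKernel k α w⁻¹ / w ^ 2‖ ≤ (1 - c)⁻¹ := by
  have hw1 : w ≤ 1 := hwc.trans hc.le
  have hpow : w ^ α ≤ w ^ 2 := pow_le_pow_of_le_one hw.le hw1 hα
  have hpow' : w ^ α ≤ w := pow_le_of_le_one hw.le hw1 (by omega)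
  have he1 : exp (-(k * w⁻¹)) ≤ 1 := exp_le_one_iff.2 (by nlinarith [inv_pos.2 hw])
  rw [borelKernel_inv_div_sq k α hw.ne', norm_neg, norm_of_nonneg (by
    have : 0 ≤ 1 - w ^ α := by linarith
    positivity)]
  calc w ^ α * exp (-(k * w⁻¹)) / (w ^ 2 * (1 - w ^ α)) ≤ w ^ 2 / (w ^ 2 * (1 - c)) := by
        apply div_le_div₀ (by positivity) _ (mul_pos (by positivity) (by linarith))
          (by gcongr; linarith)
        nlinarith [(exp_pos (-(k * w⁻¹))).le, pow_nonneg hw.le α]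
    _ = (1 - c)⁻¹ := by field_simp

theorem intervalIntegrable_of_norm_le_on_Ioo {f : ℝ → ℝ} (hf : Measurable f) {a b C : ℝ}
    (hab : a ≤ b) (h : ∀ x ∈ Ioo a b, ‖f x‖ ≤ C) : IntervalIntegrable f volume a b :=
  (intervalIntegrable_iff_integrableOn_Ioo_of_le hab).2 <|
    IntegrableOn.of_bound measure_Ioo_lt_top hf.aestronglyMeasurable C
      (ae_restrict_of_forall_mem measurableSet_Ioo h)

theorem measurable_borelKernel : Measurable (borelKernel k α) := by
  unfold borelKernel
  fun_prop

theorem measurable_borelKernel_inv_div_sq :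
    Measurable fun w => borelKernel k α w⁻¹ / w ^ 2 :=
  (measurable_borelKernel.comp measurable_inv).div (measurable_id.pow_const 2)

theorem intervalIntegrable_borelKernel (hk : 0 ≤ k) (hα : α ≠ 0) {c : ℝ} (hc0 : 0 ≤ c)
    (hc : c < 1) : IntervalIntegrable (borelKernel k α) volume 0 c :=
  intervalIntegrable_of_norm_le_on_Ioo measurable_borelKernel hc0 fun _ hu =>
    norm_borelKernel_le hk hα hu.1.le hu.2.le hc

theorem intervalIntegrable_borelKernel_inv_div_sq (hk : 0 ≤ k) (hα : 2 ≤ α) {c : ℝ}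
    (hc0 : 0 ≤ c) (hc : c < 1) :
    IntervalIntegrable (fun w => borelKernel k α w⁻¹ / w ^ 2) volume 0 c :=
  intervalIntegrable_of_norm_le_on_Ioo measurable_borelKernel_inv_div_sq hc0 fun _ hw =>
    norm_borelKernel_inv_div_sq_le hk hα hw.1 hw.2.le hc

theorem intervalIntegrable_foldedBorelKernel (hk : 0 < k) (hα : 2 ≤ α) :
    IntervalIntegrable (foldedBorelKernel k α) volume 0 1 := by
  have hhalf : (1 / 2 : ℝ) < 1 := by norm_num
  refine IntervalIntegrable.trans (b := 1 / 2)
    ((intervalIntegrable_borelKernel hk.le (by omega) (by norm_num) hhalf).add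
      (intervalIntegrable_borelKernel_inv_div_sq hk.le hα (by norm_num) hhalf))
    (intervalIntegrable_of_norm_le_on_Ioo (C := 2 * k + 1)
      (measurable_borelKernel.add measurable_borelKernel_inv_div_sq) hhalf.le fun w hw => ?_)
  have hw0 : 0 < w := by linarith [hw.1]
  change ‖foldedBorelKernel k α w‖ ≤ _
  rw [norm_of_nonneg (foldedBorelKernel_pos hk hα hw0 hw.2).le]
  calc foldedBorelKernel k α w ≤ k / w + 1 := foldedBorelKernel_le hk.le hα hw0 hw.2
    _ ≤ 2 * k + 1 := by
        gcongr
        rw [div_le_iff₀ hw0]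
        nlinarith [hw.1]

theorem one_sub_le_inv_one_add {ε : ℝ} (hε : 0 < 1 + ε) : 1 - ε ≤ (1 + ε)⁻¹ := by
  rw [← one_div, le_div_iff₀ hε]
  nlinarith [sq_nonneg ε]

theorem pvTruncation_borelKernel_eq (hk : 0 ≤ k) (hα : 2 ≤ α) {ε : ℝ} (hε0 : 0 < ε)
    (hε1 : ε < 1) :
    pvTruncation (borelKernel k α) 1 ε =
      (∫ w in (0:ℝ)..(1 + ε)⁻¹, foldedBorelKernel k α w) -
        ∫ u in (1 - ε)..(1 + ε)⁻¹, borelKernel k α u := by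
  have hc0 : 0 < (1 + ε)⁻¹ := by positivity
  have hc1 : (1 + ε)⁻¹ < 1 := inv_lt_one_of_one_lt₀ (by linarith)
  have hεc : 1 - ε ≤ (1 + ε)⁻¹ := one_sub_le_inv_one_add (by linarith)
  have hF := intervalIntegrable_borelKernel (α := α) hk (by omega) hc0.le hc1
  have hH := intervalIntegrable_borelKernel_inv_div_sq hk hα hc0.le hc1
  have htail : ∫ u in Ioi (1 + ε), borelKernel k α u =
      ∫ w in (0:ℝ)..(1 + ε)⁻¹, borelKernel k α w⁻¹ / w ^ 2 := by
    rw [integral_Ioi_eq_integral_Ioo_inv _ (by linarith), intervalIntegral.integral_of_le hc0.le,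
      integral_Ioc_eq_integral_Ioo]
  have hgap := intervalIntegral.integral_interval_sub_left hF
    (hF.mono_set (uIcc_subset_uIcc left_mem_uIcc
      (by rw [uIcc_of_le hc0.le]; exact ⟨by linarith, hεc⟩)))
  have hfold : ∫ w in (0:ℝ)..(1 + ε)⁻¹, foldedBorelKernel k α w =
      (∫ w in (0:ℝ)..(1 + ε)⁻¹, borelKernel k α w) +
        ∫ w in (0:ℝ)..(1 + ε)⁻¹, borelKernel k α w⁻¹ / w ^ 2 :=
    intervalIntegral.integral_add hF hH
  rw [pvTruncation, mul_one, mul_one, htail, ← hgap, hfold]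
  ring

theorem norm_integral_borelKernel_le (hk : 0 ≤ k) (hα : α ≠ 0) {ε : ℝ} (hε0 : 0 < ε)
    (hε1 : ε < 1) : ‖∫ u in (1 - ε)..(1 + ε)⁻¹, borelKernel k α u‖ ≤ ε := by
  have hc1 : (1 + ε)⁻¹ < 1 := inv_lt_one_of_one_lt₀ (by linarith)
  have hεc : 1 - ε ≤ (1 + ε)⁻¹ := one_sub_le_inv_one_add (by linarith)
  calc ‖∫ u in (1 - ε)..(1 + ε)⁻¹, borelKernel k α u‖
      ≤ (1 - (1 + ε)⁻¹)⁻¹ * |(1 + ε)⁻¹ - (1 - ε)| := by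
        refine intervalIntegral.norm_integral_le_of_norm_le_const fun u hu => ?_
        rw [uIoc_of_le hεc] at hu
        exact norm_borelKernel_le hk hα (by linarith [hu.1]) hu.2 hc1
    _ = ε := by
        rw [abs_of_nonneg (by linarith)]
        field_simp
        rw [div_eq_iff (by linarith)]
        ring

theorem tendsto_pvTruncation_borelKernel (hk : 0 < k) (hα : 2 ≤ α) :
    Tendsto (pvTruncation (borelKernel k α) 1) (𝓝[>] 0)
      (𝓝 (∫ w in (0:ℝ)..1, foldedBorelKernel k α w)) := by
  have hε : ∀ᶠ ε in 𝓝[>] (0:ℝ), ε ∈ Ioo 0 1 := Ioo_mem_nhdsGT one_pos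
  have hc : Tendsto (fun ε : ℝ => (1 + ε)⁻¹) (𝓝[>] 0) (𝓝[[[0, 1]]] 1) := by
    refine tendsto_nhdsWithin_iff.2 ⟨?_, hε.mono fun ε hε => ?_⟩
    · have h : Tendsto (fun ε : ℝ => 1 + ε) (𝓝 0) (𝓝 (1 + 0)) :=
        tendsto_const_nhds.add tendsto_id
      have := h.inv₀ (by norm_num)
      simpa using this.mono_left nhdsWithin_le_nhds
    · rw [uIcc_of_le zero_le_one]
      exact ⟨inv_nonneg.2 (by linarith [hε.1]), inv_le_one_of_one_le₀ (by linarith [hε.1])⟩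
  have hmain := ((intervalIntegral.continuousOn_primitive_interval'
    (intervalIntegrable_foldedBorelKernel hk hα) left_mem_uIcc) 1 right_mem_uIcc).tendsto.comp hc
  have hgap : Tendsto (fun ε : ℝ => ∫ u in (1 - ε)..(1 + ε)⁻¹, borelKernel k α u)
      (𝓝[>] 0) (𝓝 0) :=
    squeeze_zero_norm' (hε.mono fun ε hε => norm_integral_borelKernel_le hk.le (by omega)
      hε.1 hε.2) (tendsto_id.mono_left nhdsWithin_le_nhds)
  refine (sub_zero (∫ w in (0:ℝ)..1, foldedBorelKernel k α w) ▸ hmain.sub hgap).congr' ?_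
  filter_upwards [hε] with ε hε
  exact (pvTruncation_borelKernel_eq hk.le hα hε.1 hε.2).symm

theorem integral_foldedBorelKernel_pos (hk : 0 < k) (hα : 2 ≤ α) :
    0 < ∫ w in (0:ℝ)..1, foldedBorelKernel k α w :=
  intervalIntegral.intervalIntegral_pos_of_pos_on (intervalIntegrable_foldedBorelKernel hk hα)
    (fun _ hw => foldedBorelKernel_pos hk hα hw.1 hw.2) one_pos

end

/-- Let `g > 0`, `A > 0` be real and `α ≥ 2` an integer. Then the Cauchy principal value
`PV ∫₀^∞ e^{−S/g^{1/α}}/(1 − A·S^α) dS`, taken at the pole `S₀ = A^{−1/α}`, exists and is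
strictly positive: there is `L > 0` such that the limit as `ε → 0⁺` of the sum of the
integrals over `(0, (1−ε)·A^{−1/α})` and `((1+ε)·A^{−1/α}, ∞)` equals `L`. -/
theorem pv_borel_integral_exists_pos
    (g A : ℝ) (hg : 0 < g) (hA : 0 < A) (α : ℕ) (hα : 2 ≤ α) :
    ∃ L : ℝ, 0 < L ∧
      Tendsto (fun ε : ℝ =>
          (∫ S in (0:ℝ)..((1 - ε) * A ^ (-(1:ℝ) / α)),
              Real.exp (-S / g ^ ((1:ℝ) / α)) / (1 - A * S ^ α)) +
            ∫ S in Set.Ioi ((1 + ε) * A ^ (-(1:ℝ) / α)),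
              Real.exp (-S / g ^ ((1:ℝ) / α)) / (1 - A * S ^ α))
        (nhdsWithin 0 (Set.Ioi 0)) (nhds L) := by
  set σ := A ^ (-(1:ℝ) / α)
  have hσ : 0 < σ := Real.rpow_pos_of_pos hA _
  set k := σ / g ^ ((1:ℝ) / α)
  have hk : 0 < k := div_pos hσ (Real.rpow_pos_of_pos hg _)
  have hAσ : A * σ ^ α = 1 := by
    rw [← Real.rpow_natCast, ← Real.rpow_mul hA.le,
      div_mul_cancel₀ _ (by exact_mod_cast (show α ≠ 0 by omega)), Real.rpow_neg_one,
      mul_inv_cancel₀ hA.ne']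
  have hscale : (fun u => Real.exp (-(σ * u) / g ^ ((1:ℝ) / α)) / (1 - A * (σ * u) ^ α)) =
      borelKernel k α := by
    funext u
    rw [borelKernel, mul_pow, ← mul_assoc, hAσ, one_mul, neg_div, mul_div_right_comm]
  refine ⟨σ * ∫ w in (0:ℝ)..1, foldedBorelKernel k α w,
    mul_pos hσ (integral_foldedBorelKernel_pos hk hα), ?_⟩
  have hlim := (tendsto_pvTruncation_borelKernel hk hα).const_mul σ
  rw [← hscale] at hlim
  exact hlim.congr fun ε => (pvTruncation_eq_mul_pvTruncation_comp_mul_left _ hσ ε).symm
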